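/- arXiv:2107.10448 — 7 statements merged into one kernel-verified Lean document; each statement's English description precedes it below -/
import Mathlib

section
/- Let $\lambda, \kappa, \mu, C > 0$ and let $R \ge 1$ be a real number with $C \ge \frac{4\kappa\sqrt{\lambda\mu}}{R+1}$. Then the minimum of $\frac{\lambda\kappa\mu}{m p n}$ over positive reals $p, m, n$ subject to $R = pmn + p - 1$ and $\frac{\lambda\kappa}{pm} + \frac{\kappa\mu}{pn} \le C$ equals $\frac{2C\lambda\kappa\mu}{C(R+1) + \sqrt{C^2(R+1)^2 - 16\lambda\kappa^2\mu}}$, attained at $p^* = \frac{1}{2}(R+1) - \frac{1}{2}\sqrt{(R+1)^2 - \frac{16\lambda\kappa^2\mu}{C^2}}$, with $m^* n^* = \frac{R+1}{p^*} - 1$ and $\lambda\kappa n^* = \kappa\mu m^*$. -/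
set_option maxHeartbeats 1600000 in
theorem stmt_3 (lam kap mu C R : ℝ)
    (hlam : 0 < lam) (hkap : 0 < kap) (hmu : 0 < mu) (hC : 0 < C)
    (hR : 1 ≤ R) (hCmin : 4 * kap * Real.sqrt (lam * mu) / (R + 1) ≤ C) :
    IsLeast {L : ℝ | ∃ p m n : ℝ, 0 < p ∧ 0 < m ∧ 0 < n ∧
        R = p * m * n + p - 1 ∧
        lam * kap / (p * m) + kap * mu / (p * n) ≤ C ∧
        L = lam * kap * mu / (m * p * n)}
      (2 * C * lam * kap * mu /
        (C * (R + 1) + Real.sqrt (C ^ 2 * (R + 1) ^ 2 - 16 * lam * kap ^ 2 * mu))) ∧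
    ∃ m n : ℝ, 0 < m ∧ 0 < n ∧
      (let p := (R + 1) / 2 - Real.sqrt ((R + 1) ^ 2 - 16 * lam * kap ^ 2 * mu / C ^ 2) / 2;
        0 < p ∧ R = p * m * n + p - 1 ∧
        lam * kap / (p * m) + kap * mu / (p * n) ≤ C ∧
        m * n = (R + 1) / p - 1 ∧ lam * kap * n = kap * mu * m ∧
        lam * kap * mu / (m * p * n)
          = 2 * C * lam * kap * mu /
            (C * (R + 1) + Real.sqrt (C ^ 2 * (R + 1) ^ 2 - 16 * lam * kap ^ 2 * mu))) := by
  have hRp : (0:ℝ) < R + 1 := by linarith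
  have hlm : (0:ℝ) ≤ lam * mu := by positivity
  have hsqlm : Real.sqrt (lam * mu) ^ 2 = lam * mu := Real.sq_sqrt hlm
  have hCR : 4 * kap * Real.sqrt (lam * mu) ≤ C * (R + 1) := by
    rw [div_le_iff₀ hRp] at hCmin; linarith
  have hD : 0 ≤ C ^ 2 * (R + 1) ^ 2 - 16 * lam * kap ^ 2 * mu := by
    nlinarith [Real.sqrt_nonneg (lam * mu), hCR, hsqlm,
      mul_nonneg (mul_nonneg (by norm_num : (0:ℝ) ≤ 4) hkap.le) (Real.sqrt_nonneg (lam * mu))]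
  obtain ⟨s, hsdef⟩ : ∃ s, s = Real.sqrt (C ^ 2 * (R + 1) ^ 2 - 16 * lam * kap ^ 2 * mu) :=
    ⟨_, rfl⟩
  rw [← hsdef]
  have hs2 : s ^ 2 = C ^ 2 * (R + 1) ^ 2 - 16 * lam * kap ^ 2 * mu := by
    rw [hsdef]; exact Real.sq_sqrt hD
  have hs0 : 0 ≤ s := by rw [hsdef]; exact Real.sqrt_nonneg _
  have h16 : 0 < 16 * lam * kap ^ 2 * mu := by positivity
  have hslt : s < C * (R + 1) := by
    nlinarith only [hs2, hs0, h16, mul_pos hC hRp]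
  obtain ⟨ps, hpsdef⟩ : ∃ ps, ps = (C * (R + 1) - s) / (2 * C) := ⟨_, rfl⟩
  have hps : 2 * C * ps = C * (R + 1) - s := by
    rw [hpsdef]; field_simp
  have hps0 : 0 < ps := by
    rw [hpsdef]; apply div_pos (by linarith) (by linarith)
  have hpslt : ps < R + 1 := by
    nlinarith only [hps, hs0, hC, mul_pos hC hRp]
  have hkey : C ^ 2 * ps * ((R + 1) - ps) = 4 * lam * kap ^ 2 * mu := by
    linear_combination (-(2 * C * ps - C * (R + 1) - s) / 4) * hps - (1 / 4 : ℝ) * hs2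
  have hT0 : 0 < (R + 1) - ps := by linarith
  obtain ⟨T, hTdef⟩ : ∃ T, T = ((R + 1) - ps) / ps := ⟨_, rfl⟩
  have hTpos : 0 < T := hTdef ▸ div_pos hT0 hps0
  have hpT : ps * T = (R + 1) - ps := by
    rw [hTdef]; field_simp
  obtain ⟨w, hwdef⟩ : ∃ w, w = Real.sqrt (lam * mu * T) := ⟨_, rfl⟩
  have hw0 : 0 < w := by rw [hwdef]; exact Real.sqrt_pos.mpr (by positivity)
  have hw2 : w ^ 2 = lam * mu * T := by rw [hwdef]; exact Real.sq_sqrt (by positivity)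
  obtain ⟨ms, hmsdef⟩ : ∃ ms, ms = w / mu := ⟨_, rfl⟩
  obtain ⟨ns, hnsdef⟩ : ∃ ns, ns = w / lam := ⟨_, rfl⟩
  have hms0 : 0 < ms := by rw [hmsdef]; positivity
  have hns0 : 0 < ns := by rw [hnsdef]; positivity
  have hmn : ms * ns = T := by
    rw [hmsdef, hnsdef]; field_simp
    linear_combination hw2
  have hCpw : C * ps * w = 2 * lam * kap * mu := by
    have hsq : (C * ps * w) ^ 2 = (2 * lam * kap * mu) ^ 2 := by
      have h1 : C ^ 2 * ps ^ 2 * T = 4 * lam * kap ^ 2 * mu := by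
        linear_combination C ^ 2 * ps * hpT + hkey
      linear_combination C ^ 2 * ps ^ 2 * hw2 + lam * mu * h1
    exact (sq_eq_sq₀ (by positivity) (by positivity)).mp hsq
  have hstor : lam * kap / (ps * ms) + kap * mu / (ps * ns) ≤ C := by
    have e1 : lam * kap / (ps * ms) = lam * kap * mu / (ps * w) := by
      rw [hmsdef, show ps * (w / mu) = ps * w / mu from by ring, div_div_eq_mul_div]
    have e2 : kap * mu / (ps * ns) = kap * mu * lam / (ps * w) := by
      rw [hnsdef, show ps * (w / lam) = ps * w / lam from by ring, div_div_eq_mul_div]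
    have e : lam * kap / (ps * ms) + kap * mu / (ps * ns) = C := by
      rw [e1, e2, ← add_div, eq_comm, eq_div_iff (by positivity)]
      linear_combination hCpw
    linarith [e.le]
  have hReqs : R = ps * ms * ns + ps - 1 := by
    have h1 : ps * (ms * ns) = (R + 1) - ps := by rw [hmn]; exact hpT
    linear_combination -h1
  have hmps : ms * ps * ns = (R + 1) - ps := by
    calc ms * ps * ns = ps * (ms * ns) := by ring
    _ = (R + 1) - ps := by rw [hmn]; exact hpT
  have hobj : lam * kap * mu / (ms * ps * ns)
      = 2 * C * lam * kap * mu / (C * (R + 1) + s) := by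
    rw [hmps]
    have h2 : (R + 1) - ps = (C * (R + 1) + s) / (2 * C) := by
      rw [hpsdef]; field_simp; ring
    rw [h2, div_div_eq_mul_div]
    ring
  constructor
  · constructor
    · exact ⟨ps, ms, ns, hps0, hms0, hns0, hReqs, hstor, hobj.symm⟩
    · rintro L ⟨p, m, n, hp, hm, hn, hReq, hst, hLeq⟩
      have hmn0 : 0 < m * n := mul_pos hm hn
      have hpmn : p * (m * n) = (R + 1) - p := by linear_combination -hReq
      have hplt : p < R + 1 := by linarith only [hpmn, mul_pos hp hmn0]
      have hst' : lam * kap * n + kap * mu * m ≤ C * (p * (m * n)) := by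
        have e1 : lam * kap / (p * m) = (lam * kap * n) / (p * (m * n)) := by
          field_simp
        have e2 : kap * mu / (p * n) = (kap * mu * m) / (p * (m * n)) := by
          field_simp
        rw [e1, e2, ← add_div, div_le_iff₀ (by positivity)] at hst
        linarith [hst]
      have hquad : 4 * lam * kap ^ 2 * mu ≤ C ^ 2 * (p * ((R + 1) - p)) := by
        have ha : 0 < lam * kap * n + kap * mu * m := by positivity
        have h1 : (4 * lam * kap ^ 2 * mu) * (m * n) ≤ (C ^ 2 * (p ^ 2 * (m * n))) * (m * n) := by
          nlinarith only [sq_nonneg (lam * kap * n - kap * mu * m), hst', ha]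
        have h2 := le_of_mul_le_mul_right h1 hmn0
        calc 4 * lam * kap ^ 2 * mu ≤ C ^ 2 * (p ^ 2 * (m * n)) := h2
        _ = C ^ 2 * (p * (p * (m * n))) := by ring
        _ = C ^ 2 * (p * ((R + 1) - p)) := by rw [hpmn]
      have hpge : ps ≤ p := by
        have hA : (2 * C * p - C * (R + 1)) ^ 2 ≤ s ^ 2 := by
          nlinarith only [hquad, hs2]
        have hX : -s ≤ 2 * C * p - C * (R + 1) := by
          nlinarith only [hA, hs0]
        have h2 : 2 * C * ps ≤ 2 * C * p := by linarith only [hps, hX]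
        exact le_of_mul_le_mul_left h2 (by positivity : (0:ℝ) < 2 * C)
      have hLval : L = lam * kap * mu / ((R + 1) - p) := by
        rw [hLeq, show m * p * n = p * (m * n) by ring, hpmn]
      rw [hLval, hobj.symm, hmps]
      exact div_le_div_of_nonneg_left (by positivity) (by linarith) (by linarith)
  · refine ⟨ms, ns, hms0, hns0, ?_⟩
    have hletp : (R + 1) / 2 - Real.sqrt ((R + 1) ^ 2 - 16 * lam * kap ^ 2 * mu / C ^ 2) / 2
        = ps := by
      have h1 : (R + 1) ^ 2 - 16 * lam * kap ^ 2 * mu / C ^ 2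
          = (C ^ 2 * (R + 1) ^ 2 - 16 * lam * kap ^ 2 * mu) / C ^ 2 := by
        field_simp
      rw [h1, Real.sqrt_div hD, Real.sqrt_sq hC.le, hpsdef, ← hsdef]
      field_simp
    rw [hletp]
    show 0 < ps ∧ R = ps * ms * ns + ps - 1 ∧
        lam * kap / (ps * ms) + kap * mu / (ps * ns) ≤ C ∧
        ms * ns = (R + 1) / ps - 1 ∧ lam * kap * ns = kap * mu * ms ∧
        lam * kap * mu / (ms * ps * ns)
          = 2 * C * lam * kap * mu / (C * (R + 1) + s)
    refine ⟨hps0, hReqs, hstor, ?_, ?_, hobj⟩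
    · rw [hmn, hTdef]; field_simp
    · rw [hmsdef, hnsdef]; field_simp
end

section
/- Let $\lambda, \kappa, \mu > 0$ and $R \ge 1$. For all positive reals $p, m, n$ with $R = pmn + p - 1$ and $m, n \ge 1$, the storage $\frac{\lambda\kappa}{pm} + \frac{\kappa\mu}{pn}$ is at least $\frac{4\kappa\sqrt{\lambda\mu}}{R+1}$. -/
theorem stmt_4 (lam kap mu R : ℝ)
    (hlam : 0 < lam) (hkap : 0 < kap) (hmu : 0 < mu) (hR : 1 ≤ R) :
    ∀ p m n : ℝ, 0 < p → 0 < m → 0 < n → 1 ≤ m → 1 ≤ n →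
      R = p * m * n + p - 1 →
      4 * kap * Real.sqrt (lam * mu) / (R + 1)
        ≤ lam * kap / (p * m) + kap * mu / (p * n) := by
  intro p m n hp hm hn hm1 hn1 hRe
  set s := Real.sqrt (lam * mu) with hsdef
  set u := Real.sqrt (m * n) with hudef
  have hs0 : 0 ≤ s := Real.sqrt_nonneg _
  have hu0 : 0 ≤ u := Real.sqrt_nonneg _
  have hs : s ^ 2 = lam * mu := Real.sq_sqrt (by positivity)
  have hu : u ^ 2 = m * n := Real.sq_sqrt (by positivity)
  set a := Real.sqrt (lam * n) with hadef
  set b := Real.sqrt (mu * m) with hbdef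
  have ha : a ^ 2 = lam * n := Real.sq_sqrt (by positivity)
  have hb : b ^ 2 = mu * m := Real.sq_sqrt (by positivity)
  have hab : a * b = s * u := by
    rw [hadef, hbdef, hsdef, hudef, ← Real.sqrt_mul (by positivity),
      ← Real.sqrt_mul (by positivity)]
    ring_nf
  have key1 : 2 * (s * u) ≤ lam * n + mu * m := by
    nlinarith [sq_nonneg (a - b), ha, hb, hab]
  have key2 : 2 * u ≤ m * n + 1 := by nlinarith [sq_nonneg (u - 1)]
  have key3 : 4 * s * (m * n) ≤ (lam * n + mu * m) * (m * n + 1) := by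
    nlinarith [mul_le_mul key2 key1 (by positivity) (by positivity), hu, hs0]
  rw [hRe, div_add_div _ _ (by positivity) (by positivity),
    div_le_div_iff₀ (by nlinarith) (by positivity)]
  have hkp : (0:ℝ) < kap * p ^ 2 := by positivity
  nlinarith [mul_le_mul_of_nonneg_left key3 hkp.le]
end

section
/- Let $\lambda, \kappa, \mu, C > 0$ and real numbers $R_1 \ge R_2 \ge 1$ with $C \ge \frac{4\kappa\sqrt{\lambda\mu}(2R_1 - R_2 + 1)}{(R_1+1)(R_2+1)}$. Then the minimum of $\frac{\lambda\kappa\mu}{p_1 m_1 n_1}$ over positive reals $p_1,m_1,n_1,p_2,m_2,n_2$ with $m_2, n_2 \ge 1$, subject to $R_1 = p_1 m_1 n_1 + p_1 - 1$, $R_2 = p_2 m_2 n_2 + p_2 - 1$, and $\frac{1}{p_1}(\frac{\lambda\kappa}{m_1} + \frac{\kappa\mu}{n_1}) + \frac{R_1 - R_2}{p_1 p_2}(\frac{\lambda\kappa}{m_1 m_2} + \frac{\kappa\mu}{n_1 n_2}) \le C$, equals $\frac{2C(R_2+1)\lambda\kappa\mu}{C(R_1+1)(R_2+1) + \sqrt{C^2(R_1+1)^2(R_2+1)^2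 - 16\lambda\kappa^2\mu(2R_1 - R_2 + 1)^2}}$. -/
set_option maxHeartbeats 1000000

lemma amgm_div' (a b x y d : ℝ) (ha : 0 < a) (hb : 0 < b) (hx : 0 < x)
    (hy : 0 < y) (hd : 0 < d) (hxy : x * y ≤ d ^ 2) :
    2 * Real.sqrt (a * b) / d ≤ a / x + b / y := by
  have hax : 0 < a / x := div_pos ha hx
  have hby : 0 < b / y := div_pos hb hy
  have h1 : Real.sqrt (a / x) * Real.sqrt (b / y) = Real.sqrt (a * b / (x * y)) := by
    rw [← Real.sqrt_mul hax.le, div_mul_div_comm]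
  have h2 : Real.sqrt (a * b) / d ≤ Real.sqrt (a * b / (x * y)) := by
    rw [Real.le_sqrt (by positivity) (by positivity)]
    rw [div_pow, Real.sq_sqrt (by positivity)]
    exact div_le_div_of_nonneg_left (by positivity) (by positivity) hxy
  have h3 : 2 * (Real.sqrt (a / x) * Real.sqrt (b / y)) ≤ a / x + b / y := by
    nlinarith [sq_nonneg (Real.sqrt (a / x) - Real.sqrt (b / y)),
      Real.sq_sqrt hax.le, Real.sq_sqrt hby.le]
  calc 2 * Real.sqrt (a * b) / d = 2 * (Real.sqrt (a * b) / d) := by ring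
    _ ≤ 2 * Real.sqrt (a * b / (x * y)) := by linarith
    _ = 2 * (Real.sqrt (a / x) * Real.sqrt (b / y)) := by rw [h1]
    _ ≤ a / x + b / y := h3

lemma le_of_sq_le_sq'' (x s : ℝ) (h : x ^ 2 ≤ s ^ 2) (hs : 0 ≤ s) : x ≤ s := by
  nlinarith

theorem stmt_6 (lam kap mu C R1 R2 : ℝ)
    (hlam : 0 < lam) (hkap : 0 < kap) (hmu : 0 < mu) (hC : 0 < C)
    (hR12 : R2 ≤ R1) (hR2 : 1 ≤ R2)
    (hCmin : 4 * kap * Real.sqrt (lam * mu) * (2 * R1 - R2 + 1) /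
      ((R1 + 1) * (R2 + 1)) ≤ C) :
    IsLeast {L : ℝ | ∃ p1 m1 n1 p2 m2 n2 : ℝ,
        0 < p1 ∧ 0 < m1 ∧ 0 < n1 ∧ 0 < p2 ∧ 1 ≤ m2 ∧ 1 ≤ n2 ∧
        R1 = p1 * m1 * n1 + p1 - 1 ∧
        R2 = p2 * m2 * n2 + p2 - 1 ∧
        (1 / p1) * (lam * kap / m1 + kap * mu / n1)
          + (R1 - R2) / (p1 * p2) * (lam * kap / (m1 * m2) + kap * mu / (n1 * n2)) ≤ C ∧
        L = lam * kap * mu / (p1 * m1 * n1)}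
      (2 * C * (R2 + 1) * lam * kap * mu /
        (C * (R1 + 1) * (R2 + 1)
          + Real.sqrt (C ^ 2 * (R1 + 1) ^ 2 * (R2 + 1) ^ 2
              - 16 * lam * kap ^ 2 * mu * (2 * R1 - R2 + 1) ^ 2))) := by
  have hR1 : 1 ≤ R1 := le_trans hR2 hR12
  have hg : (0:ℝ) < 2 * R1 - R2 + 1 := by linarith
  have hR1p : (0:ℝ) < R1 + 1 := by linarith
  have hR2p : (0:ℝ) < R2 + 1 := by linarith
  have hK : 4 * kap * Real.sqrt (lam * mu) * (2 * R1 - R2 + 1)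
      ≤ C * ((R1 + 1) * (R2 + 1)) := (div_le_iff₀ (by positivity)).mp hCmin
  have hsqrtlm : Real.sqrt (lam * mu) ^ 2 = lam * mu := Real.sq_sqrt (by positivity)
  have hYY : (4 * kap * Real.sqrt (lam * mu) * (2 * R1 - R2 + 1)) ^ 2
      = 16 * lam * kap ^ 2 * mu * (2 * R1 - R2 + 1) ^ 2 := by
    linear_combination 16 * kap ^ 2 * (2 * R1 - R2 + 1) ^ 2 * hsqrtlm
  have hE : 0 ≤ C ^ 2 * (R1 + 1) ^ 2 * (R2 + 1) ^ 2
      - 16 * lam * kap ^ 2 * mu * (2 * R1 - R2 + 1) ^ 2 := by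
    have hXX := mul_le_mul hK hK (by positivity) (by positivity)
    linarith only [hXX, hYY]
  set s : ℝ := Real.sqrt (C ^ 2 * (R1 + 1) ^ 2 * (R2 + 1) ^ 2
      - 16 * lam * kap ^ 2 * mu * (2 * R1 - R2 + 1) ^ 2) with hs_def
  have hs0 : 0 ≤ s := Real.sqrt_nonneg _
  have hs2 : s ^ 2 = C ^ 2 * (R1 + 1) ^ 2 * (R2 + 1) ^ 2
      - 16 * lam * kap ^ 2 * mu * (2 * R1 - R2 + 1) ^ 2 := Real.sq_sqrt hE
  have hslt : s < C * (R1 + 1) * (R2 + 1) := by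
    rw [hs_def, Real.sqrt_lt' (by positivity)]
    linarith only [mul_pos (mul_pos (mul_pos hlam (pow_pos hkap 2)) hmu) (pow_pos hg 2)]
  obtain ⟨t, htX, ht⟩ : ∃ t : ℝ, t * (2 * C * (R2 + 1)) = C * (R1 + 1) * (R2 + 1) + s
      ∧ 0 < t :=
    ⟨(C * (R1 + 1) * (R2 + 1) + s) / (2 * C * (R2 + 1)),
      by field_simp, by positivity⟩
  obtain ⟨q, hqX, hq⟩ : ∃ q : ℝ, q * (2 * C * (R2 + 1)) = C * (R1 + 1) * (R2 + 1) - s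
      ∧ 0 < q :=
    ⟨(C * (R1 + 1) * (R2 + 1) - s) / (2 * C * (R2 + 1)),
      by field_simp, div_pos (by linarith) (by positivity)⟩
  have htq : t * q * (C ^ 2 * (R2 + 1) ^ 2)
      = 4 * lam * kap ^ 2 * mu * (2 * R1 - R2 + 1) ^ 2 := by
    linear_combination (1/4) * ((q * (2 * C * (R2 + 1))) * htX
      + (C * (R1 + 1) * (R2 + 1) + s) * hqX - hs2)
  have htpq : t + q = R1 + 1 := by
    have hc : (2 * C * (R2 + 1)) ≠ 0 := by positivity
    apply mul_right_cancel₀ hc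
    linear_combination htX + hqX
  constructor
  · -- membership: exhibit the optimal point
    refine ⟨q, t * C * (R2 + 1) / (2 * kap * mu * (2 * R1 - R2 + 1)),
      t * C * (R2 + 1) / (2 * kap * lam * (2 * R1 - R2 + 1)),
      (R2 + 1) / 2, 1, 1, hq, by positivity, by positivity, by positivity,
      le_refl 1, le_refl 1, ?_, by ring, ?_, ?_⟩
    · have hqmn : q * (t * C * (R2 + 1) / (2 * kap * mu * (2 * R1 - R2 + 1)))
          * (t * C * (R2 + 1) / (2 * kap * lam * (2 * R1 - R2 + 1))) = t := by
        field_simp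
        linear_combination htq
      rw [hqmn]
      linarith only [htpq]
    · apply le_of_eq
      have e1 : (1 / q) * (lam * kap / (t * C * (R2 + 1) / (2 * kap * mu * (2 * R1 - R2 + 1)))
            + kap * mu / (t * C * (R2 + 1) / (2 * kap * lam * (2 * R1 - R2 + 1))))
          + (R1 - R2) / (q * ((R2 + 1) / 2))
            * (lam * kap / (t * C * (R2 + 1) / (2 * kap * mu * (2 * R1 - R2 + 1)) * 1)
              + kap * mu / (t * C * (R2 + 1) / (2 * kap * lam * (2 * R1 - R2 + 1)) * 1))
          = 4 * lam * kap ^ 2 * mu * (2 * R1 - R2 + 1) ^ 2 / (t * q * C * (R2 + 1) ^ 2) := by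
        field_simp
        ring
      rw [e1, ← htq]
      field_simp
    · have hqmn : q * (t * C * (R2 + 1) / (2 * kap * mu * (2 * R1 - R2 + 1)))
          * (t * C * (R2 + 1) / (2 * kap * lam * (2 * R1 - R2 + 1))) = t := by
        field_simp
        linear_combination htq
      rw [hqmn, eq_div_iff (by positivity), div_mul_eq_mul_div,
        div_eq_iff (by positivity)]
      linear_combination lam * kap * mu * htX
  · -- lower bound
    rintro L ⟨p1, m1, n1, p2, m2, n2, hp1, hm1, hn1, hp2, hm2, hn2, hc1, hc2, hstor, hLdef⟩
    have hm2p : 0 < m2 := lt_of_lt_of_le one_pos hm2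
    have hn2p : 0 < n2 := lt_of_lt_of_le one_pos hn2
    have ha : 0 < lam * kap / m1 := by positivity
    have hb : 0 < kap * mu / n1 := by positivity
    set a : ℝ := lam * kap / m1 with ha_def
    set b : ℝ := kap * mu / n1 with hb_def
    set w : ℝ := Real.sqrt (a * b) with hw_def
    have hw0 : 0 ≤ w := Real.sqrt_nonneg _
    have hw2 : w ^ 2 = a * b := Real.sq_sqrt (by positivity)
    have h1 : 2 * w ≤ a + b := by
      have := amgm_div' a b 1 1 1 ha hb one_pos one_pos one_pos (by norm_num)
      simpa using this
    have hc2' : p2 * (p2 * m2 * n2) = p2 * (R2 + 1 - p2) := by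
      linear_combination (-p2) * hc2
    have h2 : (p2 * m2) * (p2 * n2) ≤ ((R2 + 1) / 2) ^ 2 := by
      linarith only [sq_nonneg (p2 - (R2 + 1) / 2), hc2']
    have h3 : 2 * w / ((R2 + 1) / 2) ≤ a / (p2 * m2) + b / (p2 * n2) :=
      amgm_div' a b (p2 * m2) (p2 * n2) ((R2 + 1) / 2) ha hb
        (by positivity) (by positivity) (by positivity) h2
    have hre : (1 / p1) * (lam * kap / m1 + kap * mu / n1)
          + (R1 - R2) / (p1 * p2) * (lam * kap / (m1 * m2) + kap * mu / (n1 * n2))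
        = ((a + b) + (R1 - R2) * (a / (p2 * m2) + b / (p2 * n2))) / p1 := by
      rw [ha_def, hb_def]
      field_simp [hp1.ne', hp2.ne', hm1.ne', hn1.ne', hm2p.ne', hn2p.ne']
    rw [hre] at hstor
    have hR1R2 : (0:ℝ) ≤ R1 - R2 := by linarith
    have h4 : (R1 - R2) * (2 * w / ((R2 + 1) / 2))
        ≤ (R1 - R2) * (a / (p2 * m2) + b / (p2 * n2)) :=
      mul_le_mul_of_nonneg_left h3 hR1R2
    have h8 : 2 * w + (R1 - R2) * (2 * w / ((R2 + 1) / 2)) ≤ C * p1 := by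
      have hst := (div_le_iff₀ hp1).mp hstor
      linarith only [hst, h4, h1]
    have h9 : 2 * w * (2 * R1 - R2 + 1) ≤ C * p1 * (R2 + 1) := by
      have e : (2 * w + (R1 - R2) * (2 * w / ((R2 + 1) / 2))) * (R2 + 1)
          = 2 * w * (2 * R1 - R2 + 1) := by
        field_simp
        ring
      linarith only [mul_le_mul_of_nonneg_right h8 hR2p.le, e]
    have h10 : 4 * (a * b) * (2 * R1 - R2 + 1) ^ 2 ≤ C ^ 2 * p1 ^ 2 * (R2 + 1) ^ 2 := by
      have h9sq := mul_le_mul h9 h9 (by positivity) (by positivity)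
      have hww : (2 * w * (2 * R1 - R2 + 1)) * (2 * w * (2 * R1 - R2 + 1))
          = 4 * (a * b) * (2 * R1 - R2 + 1) ^ 2 := by
        linear_combination 4 * (2 * R1 - R2 + 1) ^ 2 * hw2
      linarith only [h9sq, hww]
    have hab : a * b * (m1 * n1) = lam * kap ^ 2 * mu := by
      rw [ha_def, hb_def]
      field_simp
    have hab4 : 4 * (a * b) * (2 * R1 - R2 + 1) ^ 2 * (m1 * n1)
        = 4 * lam * kap ^ 2 * mu * (2 * R1 - R2 + 1) ^ 2 := by
      linear_combination 4 * (2 * R1 - R2 + 1) ^ 2 * hab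
    have h11 : 4 * lam * kap ^ 2 * mu * (2 * R1 - R2 + 1) ^ 2
        ≤ C ^ 2 * (R2 + 1) ^ 2 * (p1 * (p1 * m1 * n1)) := by
      linarith only [mul_le_mul_of_nonneg_right h10 (mul_pos hm1 hn1).le, hab4]
    have hp1e : p1 = R1 + 1 - p1 * m1 * n1 := by linarith only [hc1]
    have hsub : p1 * (p1 * m1 * n1)
        = (R1 + 1 - p1 * m1 * n1) * (p1 * m1 * n1) := by
      linear_combination (p1 * m1 * n1) * hp1e
    have hsub' : C ^ 2 * (R2 + 1) ^ 2 * (p1 * (p1 * m1 * n1))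
        = C ^ 2 * (R2 + 1) ^ 2 * ((R1 + 1 - p1 * m1 * n1) * (p1 * m1 * n1)) := by
      linear_combination C ^ 2 * (R2 + 1) ^ 2 * (p1 * m1 * n1) * hp1e
    have h12 : 4 * lam * kap ^ 2 * mu * (2 * R1 - R2 + 1) ^ 2
        ≤ C ^ 2 * (R2 + 1) ^ 2 * ((R1 + 1 - p1 * m1 * n1) * (p1 * m1 * n1)) := by
      linarith only [h11, hsub']
    have h8sq : (p1 * m1 * n1 * (2 * C * (R2 + 1)) - C * (R1 + 1) * (R2 + 1)) ^ 2
        ≤ s ^ 2 := by linarith only [h12, hs2]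
    have h13 : p1 * m1 * n1 * (2 * C * (R2 + 1)) ≤ C * (R1 + 1) * (R2 + 1) + s := by
      have h14 := le_of_sq_le_sq''
        (p1 * m1 * n1 * (2 * C * (R2 + 1)) - C * (R1 + 1) * (R2 + 1)) s h8sq hs0
      linarith only [h14]
    rw [hLdef, div_le_div_iff₀ (by positivity) (by positivity)]
    linarith only [mul_le_mul_of_nonneg_left h13 (show (0:ℝ) ≤ lam * kap * mu by positivity)]
end

section
/- Let $\lambda, \kappa, \mu > 0$, $R_1 \ge R_2 \ge 1$, and $m_1, n_1, m_2, n_2 \ge 1$ with $p_1 = \frac{R_1+1}{m_1n_1+1}$ and $p_2 = \frac{R_2+1}{m_2n_2+1}$. Then the expression $2\sqrt{\frac{\lambda\kappa^2\mu}{(R_1+1-p_1)p_1}} + 2(R_1-R_2)\sqrt{\frac{\lambda\kappa^2\mu}{(R_1+1-p_1)(R_2+1-p_2)p_1 p_2}}$ is at least $\frac{4\kappa\sqrt{\lambda\mu}(2R_1 - R_2 + 1)}{(R_1+1)(R_2+1)}$. -/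
theorem stmt_9 (lam kap mu R1 R2 m1 n1 m2 n2 : ℝ)
    (hlam : 0 < lam) (hkap : 0 < kap) (hmu : 0 < mu)
    (hR12 : R2 ≤ R1) (hR2 : 1 ≤ R2)
    (hm1 : 1 ≤ m1) (hn1 : 1 ≤ n1) (hm2 : 1 ≤ m2) (hn2 : 1 ≤ n2) :
    (let p1 := (R1 + 1) / (m1 * n1 + 1);
     let p2 := (R2 + 1) / (m2 * n2 + 1);
      4 * kap * Real.sqrt (lam * mu) * (2 * R1 - R2 + 1) / ((R1 + 1) * (R2 + 1))
        ≤ 2 * Real.sqrt (lam * kap ^ 2 * mu / ((R1 + 1 - p1) * p1))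
          + 2 * (R1 - R2) *
            Real.sqrt (lam * kap ^ 2 * mu / ((R1 + 1 - p1) * (R2 + 1 - p2) * p1 * p2))) := by
  have hR1 : (1:ℝ) ≤ R1 := le_trans hR2 hR12
  have hR1p : (0:ℝ) < R1 + 1 := by linarith
  have hR2p : (0:ℝ) < R2 + 1 := by linarith
  set p1 : ℝ := (R1 + 1) / (m1 * n1 + 1) with hp1def
  set p2 : ℝ := (R2 + 1) / (m2 * n2 + 1) with hp2def
  show 4 * kap * Real.sqrt (lam * mu) * (2 * R1 - R2 + 1) / ((R1 + 1) * (R2 + 1))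
        ≤ 2 * Real.sqrt (lam * kap ^ 2 * mu / ((R1 + 1 - p1) * p1))
          + 2 * (R1 - R2) *
            Real.sqrt (lam * kap ^ 2 * mu / ((R1 + 1 - p1) * (R2 + 1 - p2) * p1 * p2))
  have hmn1 : (1:ℝ) ≤ m1 * n1 := by nlinarith
  have hmn2 : (1:ℝ) ≤ m2 * n2 := by nlinarith
  have hp1pos : 0 < p1 := div_pos hR1p (by linarith)
  have hp2pos : 0 < p2 := div_pos hR2p (by linarith)
  have hp1lt : p1 < R1 + 1 := div_lt_self hR1p (by linarith)
  have hp2lt : p2 < R2 + 1 := div_lt_self hR2p (by linarith)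
  have ha1 : 0 < R1 + 1 - p1 := by linarith
  have ha2 : 0 < R2 + 1 - p2 := by linarith
  have hkey1 : (R1 + 1 - p1) * p1 ≤ (R1 + 1) ^ 2 / 4 := by
    nlinarith [sq_nonneg (R1 + 1 - 2 * p1)]
  have hkey2 : (R2 + 1 - p2) * p2 ≤ (R2 + 1) ^ 2 / 4 := by
    nlinarith [sq_nonneg (R2 + 1 - 2 * p2)]
  set s : ℝ := Real.sqrt (lam * mu) with hsdef
  have hspos : 0 < s := Real.sqrt_pos.mpr (by positivity)
  have hs2 : s ^ 2 = lam * mu := Real.sq_sqrt (by positivity)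
  have hq1 : 0 < (R1 + 1 - p1) * p1 := mul_pos ha1 hp1pos
  have hq2 : 0 < (R2 + 1 - p2) * p2 := mul_pos ha2 hp2pos
  have h1 : 2 * kap * s / (R1 + 1) ≤ Real.sqrt (lam * kap ^ 2 * mu / ((R1 + 1 - p1) * p1)) := by
    rw [show (2 * kap * s / (R1 + 1)) = Real.sqrt ((2 * kap * s / (R1 + 1)) ^ 2) from
      (Real.sqrt_sq (by positivity)).symm]
    apply Real.sqrt_le_sqrt
    rw [div_pow, div_le_div_iff₀ (by positivity) hq1]
    have : (2 * kap * s) ^ 2 = 4 * kap ^ 2 * (lam * mu) := by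
      rw [mul_pow, mul_pow, hs2]; ring
    rw [this]
    nlinarith [mul_pos (mul_pos hlam (pow_pos hkap 2)) hmu]
  have h2 : 4 * kap * s / ((R1 + 1) * (R2 + 1)) ≤
      Real.sqrt (lam * kap ^ 2 * mu / ((R1 + 1 - p1) * (R2 + 1 - p2) * p1 * p2)) := by
    rw [show (4 * kap * s / ((R1 + 1) * (R2 + 1))) =
      Real.sqrt ((4 * kap * s / ((R1 + 1) * (R2 + 1))) ^ 2) from
      (Real.sqrt_sq (by positivity)).symm]
    apply Real.sqrt_le_sqrt
    have hq12 : 0 < (R1 + 1 - p1) * (R2 + 1 - p2) * p1 * p2 := by positivity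
    rw [div_pow, div_le_div_iff₀ (by positivity) hq12]
    have h4 : (4 * kap * s) ^ 2 = 16 * kap ^ 2 * (lam * mu) := by
      rw [mul_pow, mul_pow, hs2]; ring
    rw [h4]
    have hprod : (R1 + 1 - p1) * (R2 + 1 - p2) * p1 * p2
        ≤ (R1 + 1) ^ 2 / 4 * ((R2 + 1) ^ 2 / 4) := by
      have h := mul_le_mul hkey1 hkey2 (le_of_lt hq2) (by positivity)
      linarith [show (R1 + 1 - p1) * (R2 + 1 - p2) * p1 * p2
        = (R1 + 1 - p1) * p1 * ((R2 + 1 - p2) * p2) from by ring]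
    have hC : (0:ℝ) ≤ 16 * kap ^ 2 * (lam * mu) := by positivity
    have := mul_le_mul_of_nonneg_left hprod hC
    linarith [show 16 * kap ^ 2 * (lam * mu) * ((R1 + 1) ^ 2 / 4 * ((R2 + 1) ^ 2 / 4))
      = lam * kap ^ 2 * mu * ((R1 + 1) * (R2 + 1)) ^ 2 from by ring]
  have hRR : 0 ≤ R1 - R2 := by linarith
  have h2' : 2 * (R1 - R2) * (4 * kap * s / ((R1 + 1) * (R2 + 1))) ≤
      2 * (R1 - R2) * Real.sqrt (lam * kap ^ 2 * mu / ((R1 + 1 - p1) * (R2 + 1 - p2) * p1 * p2)) := by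
    apply mul_le_mul_of_nonneg_left h2 (by linarith)
  have heq : 4 * kap * s * (2 * R1 - R2 + 1) / ((R1 + 1) * (R2 + 1)) =
      2 * (2 * kap * s / (R1 + 1)) + 2 * (R1 - R2) * (4 * kap * s / ((R1 + 1) * (R2 + 1))) := by
    field_simp
    ring
  linarith [heq, h1, h2']
end

section
/- Let $N > R \ge 1$ be integers and let $q_0, q_1, \ldots, q_{N-R}$ be nonnegative reals summing to 1. For a real $R_1$ with $R \le R_1 \le N$, define $h(R_1) = \frac{1}{1+R_1}\sum_{j=0}^{N-R_1-1} q_j + \frac{R_1}{1+R_1}\sum_{j=N-R_1}^{N-R}\frac{q_j}{N-j}$ (for integer $R_1$). If $q_0 > \sum_{j=1}^{N-R}\frac{q_j}{N-j}$, then $h(N) < h(N-k)$ for every integer $k$ with $1 \le k \le N-R$. -/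
/-- Expected-load function `h(R₁)` (up to a positive factor) for the flexible
construction with recovery profile `(R₁, R₁-1, …, R)`. -/
noncomputable def hload (N R : ℕ) (q : ℕ → ℝ) (R1 : ℕ) : ℝ :=
  (1 / (1 + (R1 : ℝ))) * ∑ j ∈ Finset.range (N - R1), q j
    + ((R1 : ℝ) / (1 + (R1 : ℝ))) *
        ∑ j ∈ Finset.Icc (N - R1) (N - R), q j / ((N : ℝ) - (j : ℝ))

private lemma key_ineq (n mv q0 P U Tk : ℝ) (hmv : 0 < mv) (hmn : mv + 1 ≤ n)
    (hP : 0 ≤ P) (hU : U ≤ P / (1 + mv)) (hTq : Tk < q0) :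
    (n / (1 + n)) * (q0 / n + (U + Tk))
      < (1 / (1 + mv)) * (q0 + P) + (mv / (1 + mv)) * Tk := by
  have hn0 : (0:ℝ) < n := by linarith
  have hn1 : (0:ℝ) < 1 + n := by linarith
  have hm1 : (0:ℝ) < 1 + mv := by linarith
  have hstep : (n / (1 + n)) * (q0 / n + (U + Tk))
      ≤ (n / (1 + n)) * (q0 / n + (P / (1 + mv) + Tk)) := by
    apply mul_le_mul_of_nonneg_left (by linarith) (by positivity)
  have hD : (1 / (1 + mv)) * (q0 + P) + (mv / (1 + mv)) * Tk
      - (n / (1 + n)) * (q0 / n + (P / (1 + mv) + Tk))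
      = ((n - mv) * (q0 - Tk) + P) / ((1 + n) * (1 + mv)) := by
    field_simp
    ring
  have hnum : 0 < (n - mv) * (q0 - Tk) + P := by
    have := mul_pos (show (0:ℝ) < n - mv by linarith) (show (0:ℝ) < q0 - Tk by linarith)
    linarith
  have hDpos : 0 < ((n - mv) * (q0 - Tk) + P) / ((1 + n) * (1 + mv)) :=
    div_pos hnum (by positivity)
  linarith

theorem stmt_11 (N R : ℕ) (hNR : R < N) (hR : 1 ≤ R) (q : ℕ → ℝ)
    (hq : ∀ j, j ≤ N - R → 0 ≤ q j)
    (hsum : ∑ j ∈ Finset.range (N - R + 1), q j = 1)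
    (hq0 : q 0 > ∑ j ∈ Finset.Icc 1 (N - R), q j / ((N : ℝ) - (j : ℝ))) :
    ∀ k : ℕ, 1 ≤ k → k ≤ N - R → hload N R q N < hload N R q (N - k) := by
  intro k hk1 hk2
  set m := N - k with hmdef
  have hmR : R ≤ m := by omega
  have hmN : m < N := by omega
  have hkm : N - m = k := by omega
  have hN0 : 0 < N := by omega
  have hNpos : (0:ℝ) < N := by exact_mod_cast hN0
  have hmpos : (0:ℝ) < m := by
    have : 0 < m := by omega
    exact_mod_cast this
  set T1 := ∑ j ∈ Finset.Icc 1 (N - R), q j / ((N : ℝ) - (j : ℝ)) with hT1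
  set Tk := ∑ j ∈ Finset.Icc k (N - R), q j / ((N : ℝ) - (j : ℝ)) with hTk
  set P := ∑ j ∈ Finset.Icc 1 (k - 1), q j with hP
  set U := ∑ j ∈ Finset.Icc 1 (k - 1), q j / ((N : ℝ) - (j : ℝ)) with hU
  have e1 : hload N R q N = ((N:ℝ) / (1 + (N:ℝ))) * (q 0 / (N:ℝ) + T1) := by
    unfold hload
    rw [Nat.sub_self]
    have hIcc : Finset.Icc 0 (N - R) = insert 0 (Finset.Icc 1 (N - R)) := by
      ext x; simp [Finset.mem_Icc, Finset.mem_insert]; omega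
    rw [hIcc, Finset.sum_insert (by simp)]
    rw [← hT1]
    simp
  have e2 : hload N R q m
      = (1 / (1 + (m:ℝ))) * (q 0 + P) + ((m:ℝ) / (1 + (m:ℝ))) * Tk := by
    unfold hload
    rw [hkm]
    have hrange : Finset.range k = insert 0 (Finset.Icc 1 (k - 1)) := by
      ext x; simp [Finset.mem_Icc, Finset.mem_insert, Finset.mem_range]; omega
    rw [hrange, Finset.sum_insert (by simp), ← hP, ← hTk]
  have hsplit : T1 = U + Tk := by
    rw [hT1, hU, hTk]
    have hun : Finset.Icc 1 (N - R) = Finset.Icc 1 (k - 1) ∪ Finset.Icc k (N - R) := by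
      ext x; simp [Finset.mem_Icc, Finset.mem_union]; omega
    rw [hun, Finset.sum_union]
    rw [Finset.disjoint_left]
    intro a ha hb
    simp [Finset.mem_Icc] at ha hb
    omega
  have hUle : U ≤ P / (1 + (m:ℝ)) := by
    rw [hU, hP, Finset.sum_div]
    apply Finset.sum_le_sum
    intro j hj
    rw [Finset.mem_Icc] at hj
    have hqj : 0 ≤ q j := hq j (by omega)
    have h1 : (0:ℝ) < 1 + (m:ℝ) := by linarith
    have h2 : 1 + (m:ℝ) ≤ (N:ℝ) - (j:ℝ) := by
      have : j + (m + 1) ≤ N := by omega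
      have := (Nat.cast_le (α := ℝ)).2 this
      push_cast at this
      linarith
    exact div_le_div_of_nonneg_left hqj h1 h2
  have hUnn : 0 ≤ U := by
    rw [hU]
    apply Finset.sum_nonneg
    intro j hj
    rw [Finset.mem_Icc] at hj
    have hqj : 0 ≤ q j := hq j (by omega)
    have hj2 : j < N := by omega
    have : (j:ℝ) < N := by exact_mod_cast hj2
    exact div_nonneg hqj (by linarith)
  have hTkle : Tk ≤ T1 := by rw [hsplit]; linarith
  have hq0Tk : Tk < q 0 := lt_of_le_of_lt hTkle hq0
  have hPnn : 0 ≤ P := by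
    rw [hP]
    apply Finset.sum_nonneg
    intro j hj
    rw [Finset.mem_Icc] at hj
    exact hq j (by omega)
  rw [e1, e2, hsplit]
  apply key_ineq _ _ _ _ _ _ hmpos _ hPnn hUle hq0Tk
  have : m + 1 ≤ N := by omega
  have := (Nat.cast_le (α := ℝ)).2 this
  push_cast at this
  linarith
end

section
/- Let $N > R \ge 1$ be integers, $q_0, \ldots, q_{N-R} \ge 0$, and $1 \le k \le N-R$. Then $h(N-k) - h(N) = \frac{1}{(N+1)(N-k+1)}\left(\sum_{j=0}^{k-1}\frac{(k-j)N - j}{N-j} q_j - k\sum_{j=k}^{N-R}\frac{q_j}{N-j}\right)$, where $h(R_1) = \frac{1}{1+R_1}\sum_{j=0}^{N-R_1-1} q_j + \frac{R_1}{1+R_1}\sum_{j=N-R_1}^{N-R}\frac{q_j}{N-j}$. -/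
theorem stmt_12 (N R : ℕ) (hNR : R < N) (hR : 1 ≤ R) (q : ℕ → ℝ)
    (hq : ∀ j, j ≤ N - R → 0 ≤ q j)
    (k : ℕ) (hk1 : 1 ≤ k) (hk2 : k ≤ N - R) :
    hload N R q (N - k) - hload N R q N
      = (1 / (((N : ℝ) + 1) * ((N : ℝ) - (k : ℝ) + 1))) *
        ((∑ j ∈ Finset.range k,
            (((k : ℝ) - (j : ℝ)) * (N : ℝ) - (j : ℝ)) / ((N : ℝ) - (j : ℝ)) * q j)
          - (k : ℝ) * ∑ j ∈ Finset.Icc k (N - R), q j / ((N : ℝ) - (j : ℝ))) := by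
  have hkN : k ≤ N := le_trans hk2 (Nat.sub_le N R)
  have hkN' : k < N := lt_of_le_of_lt hk2 (Nat.sub_lt_self hR (le_of_lt hNR))
  have hNk : ((N - k : ℕ) : ℝ) = (N : ℝ) - k := by
    push_cast [hkN]; ring
  have hN1 : (N : ℝ) + 1 ≠ 0 := by positivity
  have hNk1 : (N : ℝ) - k + 1 ≠ 0 := by
    have : (k : ℝ) ≤ N := by exact_mod_cast hkN
    nlinarith
  have hsplit : ∑ j ∈ Finset.Icc 0 (N - R), q j / ((N : ℝ) - j)
      = (∑ j ∈ Finset.range k, q j / ((N : ℝ) - j))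
        + ∑ j ∈ Finset.Icc k (N - R), q j / ((N : ℝ) - j) := by
    rw [← Finset.Ico_add_one_right_eq_Icc k, ← Finset.Ico_add_one_right_eq_Icc 0, Finset.range_eq_Ico]
    exact (Finset.sum_Ico_consecutive _ (Nat.zero_le k) (le_trans hk2 (Nat.le_succ _))).symm
  have e1 : (1 / ((N : ℝ) - k + 1)) * (∑ j ∈ Finset.range k, q j)
      - ((N : ℝ) / ((N : ℝ) + 1)) * ∑ j ∈ Finset.range k, q j / ((N : ℝ) - j)
      = (1 / (((N : ℝ) + 1) * ((N : ℝ) - (k : ℝ) + 1))) *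
        ∑ j ∈ Finset.range k,
          (((k : ℝ) - (j : ℝ)) * (N : ℝ) - (j : ℝ)) / ((N : ℝ) - (j : ℝ)) * q j := by
    rw [Finset.mul_sum, Finset.mul_sum, Finset.mul_sum, ← Finset.sum_sub_distrib]
    refine Finset.sum_congr rfl fun j hj => ?_
    have hjk : j < k := Finset.mem_range.mp hj
    have hjN : (j : ℝ) < N := by exact_mod_cast lt_of_lt_of_le hjk hkN
    have hNj : (N : ℝ) - j ≠ 0 := by linarith
    field_simp
    ring
  have e2 : ((N : ℝ) - k) / (1 + ((N : ℝ) - k)) - (N : ℝ) / (1 + N)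
      = - (1 / (((N : ℝ) + 1) * ((N : ℝ) - (k : ℝ) + 1))) * k := by
    have h1 : 1 + ((N : ℝ) - k) ≠ 0 := by
      intro h; apply hNk1; linarith
    have h2 : 1 + (N : ℝ) ≠ 0 := by intro h; apply hN1; linarith
    field_simp
    ring
  unfold hload
  rw [Nat.sub_self, Nat.sub_sub_self hkN, hNk, hsplit]
  simp only [Finset.range_zero, Finset.sum_empty, mul_zero, zero_add]
  linear_combination e1 + (∑ j ∈ Finset.Icc k (N - R), q j / ((N : ℝ) - j)) * e2
end

section
/- Let $p, m, n$ be positive integers and $\mathbb{F}$ a field. For matrices $A$ partitioned into $m \times p$ blocks $A_{(u,v)}$ and $B$ partitioned into $p \times n$ blocks $B_{(u,v)}$ (with compatible dimensions), define $f(x) = \sum_{u=1}^{m}\sum_{v=1}^{p} A_{(u,v)} x^{v-1+p(u-1)}$ and $g(x) = \sum_{u=1}^{p}\sum_{v=1}^{n} B_{(u,v)} x^{p-u+pm(v-1)}$. Then for each $u \in [m]$ and $w \in [n]$, the coefficient of $x^{p-1 + p(u-1) + pm(w-1)}$ in $f(x)g(x)$ equals the $(u,w)$ block $\sum_{v=1}^{p}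 A_{(u,v)} B_{(v,w)}$ of the product $AB$, and $\deg(fg) \le pmn + p - 2$. -/
open Polynomial

lemma coeffXC' {F : Type*} [Field F] (E N : ℕ) (c : F) :
    (X ^ E * C c).coeff N = if N = E then c else 0 := by
  rw [mul_comm, coeff_C_mul, coeff_X_pow]; simp

lemma L1' (m a a0 b b0 : ℕ) (hm : 0 < m) (ha : a < m) (ha0 : a0 < m)
    (h : a + m * b = a0 + m * b0) : a = a0 ∧ b = b0 := by
  have h1 : (a + m * b) % m = (a0 + m * b0) % m := by rw [h]
  rw [Nat.add_mul_mod_self_left, Nat.add_mul_mod_self_left,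
      Nat.mod_eq_of_lt ha, Nat.mod_eq_of_lt ha0] at h1
  subst h1
  refine ⟨rfl, Nat.eq_of_mul_eq_mul_left hm ?_⟩
  omega

lemma key' (p m : ℕ) (hp : 0 < p) (hm : 0 < m) (v u' u u0 w w0 : ℕ)
    (hv : v < p) (hu' : u' < p) (hu : u < m) (hu0 : u0 < m) :
    v + p * u + (p - 1 - u') + p * m * w = (p - 1) + p * u0 + p * m * w0 ↔
      v = u' ∧ u = u0 ∧ w = w0 := by
  constructor
  · intro h
    have h2 : v + p * (u + m * w) = u' + p * (u0 + m * w0) := by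
      have e1 : p * (u + m * w) = p * u + p * m * w := by ring
      have e2 : p * (u0 + m * w0) = p * u0 + p * m * w0 := by ring
      rw [e1, e2]
      set X1 := p * u; set X2 := p * m * w; set Y1 := p * u0; set Y2 := p * m * w0
      omega
    obtain ⟨h3, h4⟩ := L1' p v u' _ _ hp hv hu' h2
    obtain ⟨h5, h6⟩ := L1' m u u0 w w0 hm hu hu0 h4
    exact ⟨h3, h5, h6⟩
  · rintro ⟨rfl, rfl, rfl⟩; omega

theorem stmt_17 (F : Type*) [Field F] (p m n a b c : ℕ)
    (hp : 0 < p) (hm : 0 < m) (hn : 0 < n)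
    (A : Fin m → Fin p → Matrix (Fin a) (Fin b) F)
    (B : Fin p → Fin n → Matrix (Fin b) (Fin c) F)
    (f : Matrix (Fin a) (Fin b) F[X]) (g : Matrix (Fin b) (Fin c) F[X])
    (hf : f = ∑ u : Fin m, ∑ v : Fin p,
        (X ^ ((v : ℕ) + p * (u : ℕ)) : F[X]) • (A u v).map C)
    (hg : g = ∑ u : Fin p, ∑ v : Fin n,
        (X ^ ((p - 1 - (u : ℕ)) + p * m * (v : ℕ)) : F[X]) • (B u v).map C) :
    (∀ (u : Fin m) (w : Fin n) (i : Fin a) (j : Fin c),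
      ((f * g) i j).coeff ((p - 1) + p * (u : ℕ) + p * m * (w : ℕ))
        = (∑ v : Fin p, A u v * B v w) i j) ∧
    (∀ (i : Fin a) (j : Fin c), ((f * g) i j).natDegree ≤ p * m * n + p - 2) := by
  have hfg : ∀ (i : Fin a) (j : Fin c), (f * g) i j =
      ∑ k : Fin b, ∑ u' : Fin p, ∑ w : Fin n, ∑ u : Fin m, ∑ v : Fin p,
        X ^ ((v : ℕ) + p * (u : ℕ) + (p - 1 - (u' : ℕ)) + p * m * (w : ℕ)) *
          C (A u v i k * B u' w k j) := by
    intro i j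
    subst hf hg
    rw [Matrix.mul_apply]
    simp only [Matrix.sum_apply, Matrix.smul_apply, Matrix.map_apply, smul_eq_mul,
      Finset.sum_mul, Finset.mul_sum]
    refine Finset.sum_congr rfl fun k _ => Finset.sum_congr rfl fun u' _ =>
      Finset.sum_congr rfl fun w _ => Finset.sum_congr rfl fun u _ =>
      Finset.sum_congr rfl fun v _ => ?_
    rw [map_mul, pow_add]
    ring
  constructor
  · intro u0 w0 i j
    rw [hfg i j]
    simp only [finset_sum_coeff, coeffXC']
    have hcond : ∀ (u : Fin m) (v : Fin p) (u' : Fin p) (w : Fin n),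
        ((p - 1) + p * (u0 : ℕ) + p * m * (w0 : ℕ) =
          (v : ℕ) + p * (u : ℕ) + (p - 1 - (u' : ℕ)) + p * m * (w : ℕ)) ↔
          (v = u' ∧ u = u0 ∧ w = w0) := by
      intro u v u' w
      rw [eq_comm, key' p m hp hm _ _ _ _ _ _ v.isLt u'.isLt u.isLt u0.isLt]
      simp [Fin.val_inj]
    simp only [hcond]
    rw [Matrix.sum_apply]
    simp only [Matrix.mul_apply]
    simp [ite_and]
    rw [Finset.sum_comm]
  · intro i j
    rw [hfg i j]
    refine Polynomial.natDegree_sum_le_of_forall_le _ _ fun k _ => ?_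
    refine Polynomial.natDegree_sum_le_of_forall_le _ _ fun u' _ => ?_
    refine Polynomial.natDegree_sum_le_of_forall_le _ _ fun w _ => ?_
    refine Polynomial.natDegree_sum_le_of_forall_le _ _ fun u _ => ?_
    refine Polynomial.natDegree_sum_le_of_forall_le _ _ fun v _ => ?_
    refine le_trans (natDegree_mul_le) ?_
    rw [natDegree_C]
    refine le_trans (Nat.add_le_add_right (natDegree_X_pow_le _) 0) ?_
    have h1 : p * (u : ℕ) + p ≤ p * m := by
      have hu : (u : ℕ) + 1 ≤ m := u.isLt
      calc p * (u : ℕ) + p = p * ((u : ℕ) + 1) := by ring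
        _ ≤ p * m := Nat.mul_le_mul_left _ hu
    have h2 : p * m * (w : ℕ) + p * m ≤ p * m * n := by
      have hw : (w : ℕ) + 1 ≤ n := w.isLt
      calc p * m * (w : ℕ) + p * m = (p * m) * ((w : ℕ) + 1) := by ring
        _ ≤ p * m * n := Nat.mul_le_mul_left _ hw
    have hv := v.isLt
    have hpm : p ≤ p * m := Nat.le_mul_of_pos_right p hm
    set X1 := p * (u : ℕ); set X2 := p * m * (w : ℕ); set Y1 := p * m; set Y2 := p * m * n
    omega
end
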